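/- arXiv:1006.5128 — 2 statements merged into one kernel-verified Lean document; each statement's English description precedes it below -/
import Mathlib

section
/- In a strongly Gelfand quantale, for every h ≤ e and every partial unit f, if h ≤ f·f* then h = f·(f*·h·f)·f*. -/
/-- A unital involutive quantale: a complete lattice with a monoid structure whose
multiplication distributes over arbitrary joins in each coordinate, and an
involution `star` satisfying `(a*b)* = b* * a*`, `a** = a`, preserving joins.
The multiplicative unit `1` plays the role of `e`. -/
class UIQuantale (Q : Type*) extends CompleteLattice Q, Monoid Q, StarMul Q where
  mul_sSup : ∀ (a : Q) (s : Set Q), a * sSup s = ⨆ b ∈ s, a * b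
  sSup_mul : ∀ (a : Q) (s : Set Q), sSup s * a = ⨆ b ∈ s, b * a
  star_sSup : ∀ (s : Set Q), star (sSup s) = ⨆ b ∈ s, star b

section aux
variable {Q : Type*} [UIQuantale Q]

lemma UIQ.mul_le_mul_left' (a : Q) {b c : Q} (hbc : b ≤ c) : a * b ≤ a * c := by
  have h1 : a * sSup {b, c} = ⨆ x ∈ ({b, c} : Set Q), a * x := UIQuantale.mul_sSup a _
  rw [sSup_pair, iSup_pair, sup_eq_right.mpr hbc] at h1
  rw [h1]; exact le_sup_left

lemma UIQ.mul_le_mul_right' (a : Q) {b c : Q} (hbc : b ≤ c) : b * a ≤ c * a := by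
  have h1 : sSup {b, c} * a = ⨆ x ∈ ({b, c} : Set Q), x * a := UIQuantale.sSup_mul a _
  rw [sSup_pair, iSup_pair, sup_eq_right.mpr hbc] at h1
  rw [h1]; exact le_sup_left

lemma UIQ.mul_le_mul {a b c d : Q} (h1 : a ≤ b) (h2 : c ≤ d) : a * c ≤ b * d :=
  le_trans (UIQ.mul_le_mul_left' a h2) (UIQ.mul_le_mul_right' d h1)

lemma UIQ.star_le_star {b c : Q} (hbc : b ≤ c) : star b ≤ star c := by
  have h1 : star (sSup {b, c}) = ⨆ x ∈ ({b, c} : Set Q), star x := UIQuantale.star_sSup _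
  rw [sSup_pair, iSup_pair, sup_eq_right.mpr hbc] at h1
  rw [h1]; exact le_sup_left

end aux

theorem stmt5 (Q : Type*) [UIQuantale Q] (sg : ∀ a : Q, a ≤ a * star a * a)
    (h f : Q) (hh : h ≤ 1) (hf : star f * f ≤ 1) (hf' : f * star f ≤ 1)
    (hdom : h ≤ f * star f) :
    h = f * (star f * h * f) * star f := by
  have hstar1 : star h ≤ 1 := by
    have := UIQ.star_le_star hh
    rwa [star_one] at this
  have hhs : h * star h ≤ f * star f := by
    calc h * star h ≤ (f * star f) * 1 := UIQ.mul_le_mul hdom hstar1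
    _ = f * star f := mul_one _
  have hsh : star h * h ≤ f * star f := by
    calc star h * h ≤ 1 * (f * star f) := UIQ.mul_le_mul hstar1 hdom
    _ = f * star f := one_mul _
  apply le_antisymm
  · calc h ≤ h * star h * h := sg h
      _ ≤ h * star h * (h * star h * h) := UIQ.mul_le_mul_left' _ (sg h)
      _ = (h * star h) * h * (star h * h) := by
          simp [mul_assoc]
      _ ≤ (f * star f) * h * (f * star f) := UIQ.mul_le_mul (UIQ.mul_le_mul hhs le_rfl) hsh
      _ = f * (star f * h * f) * star f := by simp [mul_assoc]
  · calc f * (star f * h * f) * star f = (f * star f) * h * (f * star f) := by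
          simp [mul_assoc]
      _ ≤ 1 * h * 1 := UIQ.mul_le_mul (UIQ.mul_le_mul hf' le_rfl) hf'
      _ = h := by simp
end

section
/- For every SGF-quantale Q, the quotient of the incidence domain I = {(p,f) : p prime in Q_e, d(f) ≰ p} by the incidence relation, with structure maps d([p,f]) = p, r([p,f]) = f[p], u(p) = [p,e], [p,f]·[f[p],g] = [p,f·g], and [p,f]⁻¹ = [f[p],f*], is a set groupoid. -/
/-- A partial unit: both `f` and `star f` are functional. -/
def IsPU {Q : Type*} [UIQuantale Q] (f : Q) : Prop :=
  star f * f ≤ 1 ∧ f * star f ≤ 1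

/-- A prime element of `Q_e`. -/
def IsPrimeE {Q : Type*} [UIQuantale Q] (p : Q) : Prop :=
  p ≤ 1 ∧ p ≠ 1 ∧ ∀ h k : Q, h ≤ 1 → k ≤ 1 → h ⊓ k ≤ p → h ≤ p ∨ k ≤ p

/-- An SGF-quantale: a unital involutive quantale which is join-generated by its
partial units (SGF1), satisfies `f = f f* f` for partial units (SGF2), and the
separation axiom SGF3. -/
class SGFQuantale (Q : Type*) extends UIQuantale Q where
  sgf1 : ∀ a : Q, a = sSup {f | IsPU f ∧ f ≤ a}
  sgf2 : ∀ f : Q, IsPU f → f * star f * f = f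
  sgf3 : ∀ f g h : Q, IsPU f → IsPU g → h ≤ 1 → f ≤ h * ⊤ ⊔ g → f ≤ h * f ⊔ g

/-- The incidence relation: `f` and `g` are incident at `p` if some `h ≤ d(f) ⊓ d(g)`
with `h ≰ p` satisfies `h f ≤ p f ⊔ g`. -/
def Incident {Q : Type*} [SGFQuantale Q] (p f g : Q) : Prop :=
  ∃ h : Q, h ≤ (f * star f) ⊓ (g * star g) ∧ ¬ h ≤ p ∧ h * f ≤ p * f ⊔ g

/-- The incidence domain: pairs `(p, f)` with `p` prime in `Q_e`, `f` a partial unit,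
and `d(f) = f f* ≰ p`. -/
def IncDom (Q : Type*) [SGFQuantale Q] :=
  {pf : Q × Q // IsPrimeE pf.1 ∧ IsPU pf.2 ∧ ¬ pf.2 * star pf.2 ≤ pf.1}

def IncRel (Q : Type*) [SGFQuantale Q] (a b : IncDom Q) : Prop :=
  a.1.1 = b.1.1 ∧ Incident a.1.1 a.1.2 b.1.2

/-- A set groupoid, with total multiplication; axioms involving `mul x y` are
conditional on `r x = d y`. -/
structure SetGroupoid (G₀ : Type*) (G₁ : Type*) where
  d : G₁ → G₀
  r : G₁ → G₀
  u : G₀ → G₁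
  mul : G₁ → G₁ → G₁
  inv : G₁ → G₁
  d_u : ∀ p, d (u p) = p
  r_u : ∀ p, r (u p) = p
  d_mul : ∀ x y, r x = d y → d (mul x y) = d x
  r_mul : ∀ x y, r x = d y → r (mul x y) = r y
  mul_assoc : ∀ x y z, r x = d y → r y = d z → mul (mul x y) z = mul x (mul y z)
  mul_u : ∀ x, mul x (u (r x)) = x
  u_mul : ∀ x, mul (u (d x)) x = x
  mul_inv : ∀ x, mul x (inv x) = u (d x)
  inv_mul : ∀ x, mul (inv x) x = u (r x)
  d_inv : ∀ x, d (inv x) = r x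
  r_inv : ∀ x, r (inv x) = d x

/-!
For a prime `p` of `Q_e` and a partial unit `f` with `d(f) ≰ p`, the point `f[p]` is the largest
subidentity `a` with `f a ≤ p f`. Since subidentities are self-adjoint and multiply as meets,
`a ≤ f[p]` iff `f a f* ≤ p`, so `f[p]` is again prime and it is the only prime `q` with
`p f = f q`. An incidence witness `h` for `f, g` at `p` carries this over from `g` to `f`:
if `g a g* ≤ p`, then `h (f a f*) h` lies below `p ⊤`, hence below `p` by SGF3, and it equals
`h ⊓ f a f*` with `h ≰ p`. So incident arrows have the same `f[p]`, and composition and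
inversion respect incidence by explicit witnesses. The groupoid laws already hold on
representatives.
-/

namespace UIQuantale

variable {Q : Type*} [UIQuantale Q]

instance : IsQuantale Q := ⟨mul_sSup, fun s a => UIQuantale.sSup_mul a s⟩

theorem star_sup (a b : Q) : star (a ⊔ b) = star a ⊔ star b := by
  rw [← sSup_pair, star_sSup, iSup_pair]

theorem star_bot : star (⊥ : Q) = ⊥ := by
  simpa using star_sSup (∅ : Set Q)

theorem star_le_star {a b : Q} (h : a ≤ b) : star a ≤ star b := by
  rw [← sup_eq_right.2 h, star_sup]
  exact le_sup_left

theorem star_le_one {a : Q} (h : a ≤ 1) : star a ≤ 1 := by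
  simpa using star_le_star h

end UIQuantale

open UIQuantale

section PartialUnits

variable {Q : Type*} [UIQuantale Q] {f g : Q}

theorem isPU_one : IsPU (1 : Q) := by
  simp [IsPU]

theorem isPU_bot : IsPU (⊥ : Q) := by
  simp [IsPU, star_bot]

theorem isPU_of_le_one {a : Q} (ha : a ≤ 1) : IsPU a :=
  ⟨mul_le_one' (star_le_one ha) ha, mul_le_one' ha (star_le_one ha)⟩

theorem IsPU.mul (hf : IsPU f) (hg : IsPU g) : IsPU (f * g) := by
  constructor
  · calc star (f * g) * (f * g) = star g * (star f * f) * g := by simp only [star_mul, mul_assoc]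
      _ ≤ star g * 1 * g := by gcongr; exact hf.1
      _ ≤ 1 := by simpa using hg.1
  · calc f * g * star (f * g) = f * (g * star g) * star f := by simp only [star_mul, mul_assoc]
      _ ≤ f * 1 * star f := by gcongr; exact hg.2
      _ ≤ 1 := by simpa using hf.2

theorem isPU_star (hf : IsPU f) : IsPU (star f) := by
  simpa [IsPU, and_comm] using hf

end PartialUnits

section Primes

variable {Q : Type*} [UIQuantale Q] {p a b : Q}

theorem IsPrimeE.not_one_le (hp : IsPrimeE p) : ¬ 1 ≤ p :=
  fun h => hp.2.1 (le_antisymm hp.1 h)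

theorem IsPrimeE.not_inf_le (hp : IsPrimeE p) (ha : a ≤ 1) (hb : b ≤ 1) (hap : ¬ a ≤ p)
    (hbp : ¬ b ≤ p) : ¬ a ⊓ b ≤ p :=
  fun h => (hp.2.2 a b ha hb h).elim hap hbp

end Primes

namespace SGFQuantale

variable {Q : Type*} [SGFQuantale Q] {p q f f' g g' a b : Q}

theorem _root_.IsPU.mul_star_mul (hf : IsPU f) : f * star f * f = f :=
  sgf2 f hf

theorem le_star_of_isPU_of_le_one (hf : IsPU f) (h1 : f ≤ 1) : f ≤ star f :=
  calc f = f * star f * f := hf.mul_star_mul.symm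
    _ ≤ 1 * star f * 1 := by gcongr
    _ = star f := by rw [one_mul, mul_one]

theorem star_le_self_of_le_one (ha : a ≤ 1) : star a ≤ a := by
  conv_lhs => rw [sgf1 a]
  rw [star_sSup]
  refine iSup₂_le fun f ⟨hf, hfa⟩ => ?_
  calc star f ≤ star (star f) :=
        le_star_of_isPU_of_le_one (isPU_star hf) (star_le_one (hfa.trans ha))
    _ = f := star_star f
    _ ≤ a := hfa

theorem star_eq_self_of_le_one (ha : a ≤ 1) : star a = a :=
  le_antisymm (star_le_self_of_le_one ha) <| by
    simpa using star_le_self_of_le_one (star_le_one ha)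

theorem mul_self_of_le_one (ha : a ≤ 1) : a * a = a := by
  refine le_antisymm (mul_le_of_le_one_left' ha) ?_
  conv_lhs => rw [sgf1 a]
  refine sSup_le fun f ⟨hf, hfa⟩ => ?_
  have hf1 : f ≤ 1 := hfa.trans ha
  calc f = f * star f * f := hf.mul_star_mul.symm
    _ = f * f * f := by rw [star_eq_self_of_le_one hf1]
    _ ≤ a * a * 1 := by gcongr
    _ = a * a := mul_one _

theorem mul_eq_inf_of_le_one (ha : a ≤ 1) (hb : b ≤ 1) : a * b = a ⊓ b :=
  le_antisymm (le_inf (mul_le_of_le_one_right' hb) (mul_le_of_le_one_left' ha)) <|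
    calc a ⊓ b = (a ⊓ b) * (a ⊓ b) := (mul_self_of_le_one (inf_le_left.trans ha)).symm
      _ ≤ a * b := mul_le_mul' inf_le_left inf_le_right

theorem mul_comm_of_le_one (ha : a ≤ 1) (hb : b ≤ 1) : a * b = b * a := by
  rw [mul_eq_inf_of_le_one ha hb, mul_eq_inf_of_le_one hb ha, inf_comm]

theorem mul_mul_self_of_le_one (ha : a ≤ 1) (hb : b ≤ 1) : a * b * a = a ⊓ b := by
  rw [mul_eq_inf_of_le_one ha hb, mul_eq_inf_of_le_one (inf_le_left.trans ha) ha,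
    inf_right_comm, inf_idem]

theorem _root_.IsPrimeE.le_or_le_of_mul_le (hp : IsPrimeE p) (ha : a ≤ 1) (hb : b ≤ 1)
    (h : a * b ≤ p) : a ≤ p ∨ b ≤ p :=
  hp.2.2 a b ha hb (mul_eq_inf_of_le_one ha hb ▸ h)

theorem le_of_le_mul_top (hp : p ≤ 1) (ha : a ≤ 1) (h : a ≤ p * ⊤) : a ≤ p := by
  have := sgf3 a ⊥ p (isPU_of_le_one ha) isPU_bot hp (by rwa [sup_bot_eq])
  rw [sup_bot_eq] at this
  exact this.trans (mul_le_of_le_one_right' ha)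

theorem _root_.IsPU.mul_le_mul_iff_conj_le (hf : IsPU f) (ha : a ≤ 1) :
    f * a ≤ p * f ↔ f * a * star f ≤ p := by
  constructor
  · intro h
    calc f * a * star f ≤ p * f * star f := by gcongr
      _ ≤ p := by rw [mul_assoc]; exact mul_le_of_le_one_right' hf.2
  · intro h
    calc f * a = f * (star f * f) * a := by rw [← mul_assoc, hf.mul_star_mul]
      _ = f * a * star f * f := by
          rw [mul_assoc f, mul_comm_of_le_one hf.1 ha]; simp only [mul_assoc]
      _ ≤ p * f := by gcongr

/-- The point `f[p]` of the paper, when `p` is prime and `d(f) ≰ p` (see `imagePt_eq`). -/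
def imagePt (p f : Q) : Q :=
  sSup {a | a ≤ 1 ∧ f * a ≤ p * f}

theorem imagePt_le_one : imagePt p f ≤ 1 :=
  sSup_le fun _ ha => ha.1

theorem le_imagePt (ha : a ≤ 1) (h : f * a ≤ p * f) : a ≤ imagePt p f :=
  le_sSup ⟨ha, h⟩

theorem mul_imagePt (hp : p ≤ 1) (hf : IsPU f) : f * imagePt p f = p * f := by
  refine le_antisymm ?_ ?_
  · rw [imagePt, mul_sSup_distrib]
    exact iSup₂_le fun a ha => ha.2
  · have hpf : f * (star f * p * f) ≤ p * f := by
      rw [← mul_assoc, ← mul_assoc]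
      gcongr
      exact mul_le_of_le_one_left' hf.2
    have hle : star f * p * f ≤ imagePt p f :=
      le_imagePt ((mul_le_mul' (mul_le_of_le_one_right' hp) le_rfl).trans hf.1) hpf
    calc p * f = f * (star f * p * f) := by
          rw [← mul_assoc, ← mul_assoc, ← mul_comm_of_le_one hp hf.2, mul_assoc p,
            hf.mul_star_mul]
      _ ≤ f * imagePt p f := by gcongr

theorem le_imagePt_iff (hp : p ≤ 1) (hf : IsPU f) (ha : a ≤ 1) :
    a ≤ imagePt p f ↔ f * a * star f ≤ p := by
  rw [← hf.mul_le_mul_iff_conj_le ha]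
  refine ⟨fun h => ?_, le_imagePt ha⟩
  calc f * a ≤ f * imagePt p f := by gcongr
    _ = p * f := mul_imagePt hp hf

theorem star_mul_not_le_imagePt (hp : p ≤ 1) (hf : IsPU f) (hd : ¬ f * star f ≤ p) :
    ¬ star f * f ≤ imagePt p f := by
  rwa [le_imagePt_iff hp hf hf.1, ← mul_assoc, hf.mul_star_mul]

theorem isPrimeE_imagePt (hp : IsPrimeE p) (hf : IsPU f) (hd : ¬ f * star f ≤ p) :
    IsPrimeE (imagePt p f) := by
  refine ⟨imagePt_le_one, fun h1 => star_mul_not_le_imagePt hp.1 hf hd (h1 ▸ hf.1), ?_⟩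
  intro h k hh hk hhk
  have hconj : ∀ {b}, b ≤ 1 → f * b * star f ≤ 1 := fun hb =>
    (mul_le_mul' (mul_le_of_le_one_right' hb) le_rfl).trans hf.2
  rw [le_imagePt_iff hp.1 hf hh, le_imagePt_iff hp.1 hf hk]
  refine hp.le_or_le_of_mul_le (hconj hh) (hconj hk) ?_
  calc f * h * star f * (f * k * star f) = f * h * (star f * f) * k * star f := by
        simp only [mul_assoc]
    _ ≤ f * h * 1 * k * star f := by gcongr; exact hf.1
    _ = f * (h * k) * star f := by simp only [mul_one, mul_assoc]
    _ ≤ p := by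
        rw [mul_eq_inf_of_le_one hh hk]
        exact (le_imagePt_iff hp.1 hf (inf_le_left.trans hh)).1 hhk

theorem imagePt_eq (hp : IsPrimeE p) (hf : IsPU f) (hd : ¬ f * star f ≤ p) (hq : IsPrimeE q)
    (h : p * f = f * q) : imagePt p f = q := by
  have hq_le : q ≤ imagePt p f := le_imagePt hq.1 h.ge
  have hr : ¬ star f * f ≤ q := fun h' => star_mul_not_le_imagePt hp.1 hf hd (h'.trans hq_le)
  refine le_antisymm ?_ hq_le
  refine (hq.le_or_le_of_mul_le hf.1 imagePt_le_one ?_).resolve_left hr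
  calc star f * f * imagePt p f = star f * f * q := by
        rw [mul_assoc, mul_imagePt hp.1 hf, h, mul_assoc]
    _ ≤ q := mul_le_of_le_one_left' hf.1

theorem imagePt_one (hp : IsPrimeE p) : imagePt p 1 = p :=
  imagePt_eq hp isPU_one (by simpa using hp.not_one_le) hp (by simp)

theorem star_mul_eq_imagePt_mul_star (hp : p ≤ 1) (hf : IsPU f) :
    star f * p = imagePt p f * star f := by
  simpa [star_eq_self_of_le_one hp, star_eq_self_of_le_one imagePt_le_one] using
    congrArg star (mul_imagePt hp hf).symm

theorem imagePt_imagePt_star (hp : IsPrimeE p) (hf : IsPU f) (hd : ¬ f * star f ≤ p) :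
    imagePt (imagePt p f) (star f) = p :=
  imagePt_eq (isPrimeE_imagePt hp hf hd) (isPU_star hf)
    (by rw [star_star]; exact star_mul_not_le_imagePt hp.1 hf hd) hp
    (star_mul_eq_imagePt_mul_star hp.1 hf).symm

theorem mul_star_mul_not_le (hp : IsPrimeE p) (hf : IsPU f) (hg : IsPU g)
    (hdf : ¬ f * star f ≤ p) (hdg : ¬ g * star g ≤ imagePt p f) :
    ¬ f * g * star (f * g) ≤ p := by
  intro hle
  have hmul : star f * f * (g * star g) ≤ imagePt p f := by
    rw [le_imagePt_iff hp.1 hf (mul_le_one' hf.1 hg.2)]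
    calc f * (star f * f * (g * star g)) * star f = f * star f * f * g * star g * star f := by
          simp only [mul_assoc]
      _ ≤ p := by rw [hf.mul_star_mul]; rwa [star_mul, ← mul_assoc] at hle
  exact ((isPrimeE_imagePt hp hf hdf).le_or_le_of_mul_le hf.1 hg.2 hmul).elim
    (star_mul_not_le_imagePt hp.1 hf hdf) hdg

theorem imagePt_mul (hp : IsPrimeE p) (hf : IsPU f) (hg : IsPU g)
    (hdf : ¬ f * star f ≤ p) (hdg : ¬ g * star g ≤ imagePt p f) :
    imagePt p (f * g) = imagePt (imagePt p f) g := by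
  have hq := isPrimeE_imagePt hp hf hdf
  refine imagePt_eq hp (hf.mul hg) (mul_star_mul_not_le hp hf hg hdf hdg)
    (isPrimeE_imagePt hq hg hdg) ?_
  rw [← mul_assoc, ← mul_imagePt hp.1 hf, mul_assoc, mul_assoc, mul_imagePt hq.1 hg]

theorem incident_refl (hf : IsPU f) (hd : ¬ f * star f ≤ p) : Incident p f f :=
  ⟨f * star f, le_inf le_rfl le_rfl, hd, by rw [hf.mul_star_mul]; exact le_sup_right⟩

theorem incident_one_of_le_one (ha : a ≤ 1) (hap : ¬ a ≤ p) : Incident p a 1 := by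
  refine ⟨a, ?_, hap, ?_⟩
  · rw [star_eq_self_of_le_one ha, mul_self_of_le_one ha, star_one, mul_one]
    exact le_inf le_rfl ha
  · rw [mul_self_of_le_one ha]
    exact ha.trans le_sup_right

theorem _root_.Incident.symm (hp : p ≤ 1) (hf : IsPU f) (hg : IsPU g) (hinc : Incident p f g) :
    Incident p g f := by
  obtain ⟨h, hhd, hhp, hhf⟩ := hinc
  have hhdf : h ≤ f * star f := hhd.trans inf_le_left
  have hh1 : h ≤ 1 := hhdf.trans hf.2
  have hle : h ≤ p ⊔ g * star f :=
    calc h = h * f * star f := by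
          rw [mul_assoc, mul_eq_inf_of_le_one hh1 hf.2, inf_eq_left.2 hhdf]
      _ ≤ (p * f ⊔ g) * star f := by gcongr
      _ ≤ p ⊔ g * star f := by
          rw [Quantale.sup_mul_distrib, mul_assoc]
          exact sup_le_sup_right (mul_le_of_le_one_right' hf.2) _
  have hle' : h ≤ p ⊔ f * star g := by
    simpa [star_sup, star_mul, star_eq_self_of_le_one hh1, star_eq_self_of_le_one hp] using
      star_le_star hle
  refine ⟨h, hhd.trans_eq (inf_comm _ _), hhp, ?_⟩
  calc h * g ≤ (p ⊔ f * star g) * g := by gcongr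
    _ = p * g ⊔ f * (star g * g) := by rw [Quantale.sup_mul_distrib, mul_assoc]
    _ ≤ p * g ⊔ f := sup_le_sup_left (mul_le_of_le_one_right' hg.1) _

theorem _root_.Incident.conj_le (hp : IsPrimeE p) (hf : IsPU f) (hg : IsPU g)
    (hinc : Incident p f g) (ha : a ≤ 1) (hga : g * a * star g ≤ p) : f * a * star f ≤ p := by
  obtain ⟨h, hhd, hhp, hhf⟩ := hinc
  have hh1 : h ≤ 1 := (hhd.trans inf_le_left).trans hf.2
  have hfa1 : f * a * star f ≤ 1 :=
    (mul_le_mul' (mul_le_of_le_one_right' ha) le_rfl).trans hf.2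
  have hga' : g * a ≤ p * g := (hg.mul_le_mul_iff_conj_le ha).2 hga
  have hx : h * (f * a * star f) * h ≤ p * ⊤ :=
    calc h * (f * a * star f) * h = h * f * (a * (star f * h)) := by simp only [mul_assoc]
      _ ≤ (p * f ⊔ g) * (a * (star f * h)) := by gcongr
      _ = p * (f * (a * (star f * h))) ⊔ g * a * (star f * h) := by
          rw [Quantale.sup_mul_distrib]; simp only [mul_assoc]
      _ ≤ p * ⊤ := sup_le (mul_le_mul_right le_top p) <|
          calc g * a * (star f * h) ≤ p * g * (star f * h) := by gcongr
            _ ≤ p * ⊤ := by rw [mul_assoc]; exact mul_le_mul_right le_top p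
  have hxp := le_of_le_mul_top hp.1 (mul_le_one' (mul_le_one' hh1 hfa1) hh1) hx
  rw [mul_mul_self_of_le_one hh1 hfa1] at hxp
  exact (hp.2.2 _ _ hh1 hfa1 hxp).resolve_left hhp

theorem imagePt_eq_of_incident (hp : IsPrimeE p) (hf : IsPU f) (hg : IsPU g)
    (hinc : Incident p f g) : imagePt p f = imagePt p g := by
  have key : ∀ {f g : Q}, IsPU f → IsPU g → Incident p f g → imagePt p g ≤ imagePt p f :=
    fun hf hg hinc => (le_imagePt_iff hp.1 hf imagePt_le_one).2 <|
      hinc.conj_le hp hf hg imagePt_le_one ((le_imagePt_iff hp.1 hg imagePt_le_one).1 le_rfl)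
  exact le_antisymm (key hg hf (hinc.symm hp.1 hf hg)) (key hf hg hinc)

theorem _root_.Incident.mul_right (hp : IsPrimeE p) (hf : IsPU f) (hf' : IsPU f') (hg : IsPU g)
    (hinc : Incident p f f') (hd : ¬ f * g * star (f * g) ≤ p)
    (hd' : ¬ f' * g * star (f' * g) ≤ p) : Incident p (f * g) (f' * g) := by
  obtain ⟨h, hhd, hhp, hhf⟩ := hinc
  have hh1 : h ≤ 1 := (hhd.trans inf_le_left).trans hf.2
  refine ⟨h ⊓ (f * g * star (f * g) ⊓ f' * g * star (f' * g)), inf_le_right, ?_, ?_⟩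
  · exact hp.not_inf_le hh1 (inf_le_left.trans (hf.mul hg).2) hhp
      (hp.not_inf_le (hf.mul hg).2 (hf'.mul hg).2 hd hd')
  · calc (h ⊓ (f * g * star (f * g) ⊓ f' * g * star (f' * g))) * (f * g) ≤ h * f * g := by
          rw [mul_assoc h]; exact mul_le_mul_left inf_le_left _
      _ ≤ (p * f ⊔ f') * g := by gcongr
      _ = p * (f * g) ⊔ f' * g := by rw [Quantale.sup_mul_distrib, mul_assoc]

theorem _root_.Incident.mul_left (hp : p ≤ 1) (hf : IsPU f) (hg : IsPU g)
    (hinc : Incident (imagePt p f) g g') : Incident p (f * g) (f * g') := by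
  obtain ⟨h, hhd, hhq, hhg⟩ := hinc
  have hh1 : h ≤ 1 := (hhd.trans inf_le_left).trans hg.2
  have hd : ∀ k : Q, f * k * star (f * k) = f * (k * star k) * star f := fun k => by
    simp only [star_mul, mul_assoc]
  refine ⟨f * h * star f, ?_, fun hle => hhq ((le_imagePt_iff hp hf hh1).2 hle), ?_⟩
  · rw [hd, hd]
    exact le_inf (by gcongr; exact hhd.trans inf_le_left) (by gcongr; exact hhd.trans inf_le_right)
  · calc f * h * star f * (f * g) = f * h * (star f * f) * g := by simp only [mul_assoc]
      _ ≤ f * h * 1 * g := by gcongr; exact hf.1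
      _ = f * (h * g) := by rw [mul_one, mul_assoc]
      _ ≤ f * (imagePt p f * g ⊔ g') := by gcongr
      _ = p * (f * g) ⊔ f * g' := by
          rw [Quantale.mul_sup_distrib, ← mul_assoc, mul_imagePt hp hf, mul_assoc]

theorem incident_imagePt_star (hp : IsPrimeE p) (hf : IsPU f) (hf' : IsPU f')
    (hd : ¬ f * star f ≤ p) (hd' : ¬ f' * star f' ≤ p) (hinc : Incident p f f') :
    Incident (imagePt p f) (star f) (star f') := by
  have hfpt : imagePt p f = imagePt p f' := imagePt_eq_of_incident hp hf hf' hinc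
  obtain ⟨h, hhd, hhp, hhf⟩ := hinc
  have hhdf : h ≤ f * star f := hhd.trans inf_le_left
  have hh1 : h ≤ 1 := hhdf.trans hf.2
  have hk1 : star f * h * f ≤ 1 :=
    calc star f * h * f ≤ star f * 1 * f := by gcongr
      _ ≤ 1 := by simpa using hf.1
  have hkp : ¬ star f * h * f ≤ imagePt p f := by
    have hconj : f * (star f * h * f) * star f = h :=
      calc f * (star f * h * f) * star f = f * star f * h * (f * star f) := by
            simp only [mul_assoc]
        _ = h := by rw [mul_mul_self_of_le_one hf.2 hh1, inf_eq_right.2 hhdf]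
    rwa [le_imagePt_iff hp.1 hf hk1, hconj]
  have hstar : star f * h ≤ star f * p ⊔ star f' := by
    simpa [star_sup, star_mul, star_eq_self_of_le_one hh1, star_eq_self_of_le_one hp.1] using
      star_le_star hhf
  refine ⟨star f' * f' * (star f * h * f), ?_, ?_, ?_⟩
  · simp only [star_star]
    refine le_inf ?_ (mul_le_of_le_one_right' hk1)
    calc star f' * f' * (star f * h * f) ≤ star f * h * f := mul_le_of_le_one_left' hf'.1
      _ ≤ star f * 1 * f := by gcongr
      _ = star f * f := by rw [mul_one]
  · rw [mul_eq_inf_of_le_one hf'.1 hk1]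
    exact (isPrimeE_imagePt hp hf hd).not_inf_le hf'.1 hk1
      (hfpt ▸ star_mul_not_le_imagePt hp.1 hf' hd') hkp
  · calc star f' * f' * (star f * h * f) * star f
        = star f' * f' * (star f * (h * (f * star f))) := by simp only [mul_assoc]
      _ = star f' * f' * (star f * h) := by
          rw [mul_eq_inf_of_le_one hh1 hf.2, inf_eq_left.2 hhdf]
      _ ≤ star f' * f' * (star f * p ⊔ star f') := by gcongr
      _ = star f' * f' * (imagePt p f * star f) ⊔ star f' * f' * star f' := by
          rw [Quantale.mul_sup_distrib, star_mul_eq_imagePt_mul_star hp.1 hf]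
      _ ≤ imagePt p f * star f ⊔ star f' :=
          sup_le_sup (mul_le_of_le_one_left' hf'.1) (mul_le_of_le_one_left' hf'.1)

end SGFQuantale

namespace IncDom

open SGFQuantale

variable {Q : Type*} [SGFQuantale Q] {x y z : IncDom Q}

theorem isPrimeE (x : IncDom Q) : IsPrimeE x.1.1 := x.2.1

theorem isPU (x : IncDom Q) : IsPU x.1.2 := x.2.2.1

theorem dom_not_le (x : IncDom Q) : ¬ x.1.2 * star x.1.2 ≤ x.1.1 := x.2.2.2

def source (x : IncDom Q) : {p : Q // IsPrimeE p} :=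
  ⟨x.1.1, x.isPrimeE⟩

def target (x : IncDom Q) : {p : Q // IsPrimeE p} :=
  ⟨imagePt x.1.1 x.1.2, isPrimeE_imagePt x.isPrimeE x.isPU x.dom_not_le⟩

theorem target_eq_source_iff : x.target = y.source ↔ imagePt x.1.1 x.1.2 = y.1.1 :=
  Subtype.ext_iff

def unit (p : {p : Q // IsPrimeE p}) : IncDom Q :=
  ⟨(p.1, 1), p.2, isPU_one, by simpa using p.2.not_one_le⟩

/-- Junk value `x` when `x` and `y` are not composable. -/
noncomputable def comp (x y : IncDom Q) : IncDom Q :=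
  open Classical in
  if H : x.target = y.source then
    ⟨(x.1.1, x.1.2 * y.1.2), x.isPrimeE, x.isPU.mul y.isPU,
      mul_star_mul_not_le x.isPrimeE x.isPU y.isPU x.dom_not_le
        (by rw [target_eq_source_iff.1 H]; exact y.dom_not_le)⟩
  else x

def inv (x : IncDom Q) : IncDom Q :=
  ⟨(imagePt x.1.1 x.1.2, star x.1.2), x.target.2, isPU_star x.isPU,
    by rw [star_star]; exact star_mul_not_le_imagePt x.isPrimeE.1 x.isPU x.dom_not_le⟩

theorem comp_val (H : x.target = y.source) : (comp x y).1 = (x.1.1, x.1.2 * y.1.2) := by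
  rw [comp]
  exact congrArg Subtype.val (dif_pos H)

theorem comp_fst (H : x.target = y.source) : (comp x y).1.1 = x.1.1 := by
  rw [comp_val H]

theorem comp_snd (H : x.target = y.source) : (comp x y).1.2 = x.1.2 * y.1.2 := by
  rw [comp_val H]

theorem comp_of_not (H : ¬ x.target = y.source) : comp x y = x :=
  dif_neg H

theorem source_comp (H : x.target = y.source) : (comp x y).source = x.source :=
  Subtype.ext (comp_fst H)

theorem target_comp (H : x.target = y.source) : (comp x y).target = y.target := by
  refine Subtype.ext ?_
  change imagePt (comp x y).1.1 (comp x y).1.2 = imagePt y.1.1 y.1.2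
  rw [comp_fst H, comp_snd H, imagePt_mul x.isPrimeE x.isPU y.isPU x.dom_not_le
    (by rw [target_eq_source_iff.1 H]; exact y.dom_not_le), target_eq_source_iff.1 H]

theorem comp_assoc (H₁ : x.target = y.source) (H₂ : y.target = z.source) :
    comp (comp x y) z = comp x (comp y z) := by
  have H₃ : (comp x y).target = z.source := (target_comp H₁).trans H₂
  have H₄ : x.target = (comp y z).source := H₁.trans (source_comp H₂).symm
  exact Subtype.ext (Prod.ext (by rw [comp_fst H₃, comp_fst H₁, comp_fst H₄])
    (by rw [comp_snd H₃, comp_snd H₁, comp_snd H₄, comp_snd H₂, mul_assoc]))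

theorem comp_unit_target (x : IncDom Q) : comp x (unit x.target) = x :=
  Subtype.ext (Prod.ext (comp_fst rfl) ((comp_snd rfl).trans (mul_one _)))

theorem unit_source_comp (x : IncDom Q) : comp (unit x.source) x = x := by
  have H : (unit x.source).target = x.source := Subtype.ext (imagePt_one x.isPrimeE)
  exact Subtype.ext (Prod.ext (comp_fst H) ((comp_snd H).trans (one_mul _)))

theorem target_inv (x : IncDom Q) : x.inv.target = x.source :=
  Subtype.ext (imagePt_imagePt_star x.isPrimeE x.isPU x.dom_not_le)

end IncDom

namespace IncRel

open SGFQuantale IncDom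

variable {Q : Type*} [SGFQuantale Q] {x x' y y' : IncDom Q}

theorem refl (x : IncDom Q) : IncRel Q x x :=
  ⟨rfl, incident_refl x.isPU x.dom_not_le⟩

theorem target_eq (h : IncRel Q x y) : x.target = y.target := by
  refine Subtype.ext ?_
  change imagePt x.1.1 x.1.2 = imagePt y.1.1 y.1.2
  rw [imagePt_eq_of_incident x.isPrimeE x.isPU y.isPU h.2, h.1]

theorem inv (h : IncRel Q x y) : IncRel Q x.inv y.inv :=
  ⟨congrArg Subtype.val h.target_eq, incident_imagePt_star x.isPrimeE x.isPU y.isPU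
    x.dom_not_le (h.1 ▸ y.dom_not_le) h.2⟩

theorem comp_left (h : IncRel Q x x') (y : IncDom Q) : IncRel Q (comp x y) (comp x' y) := by
  by_cases H : x.target = y.source
  · have H' : x'.target = y.source := h.target_eq.symm.trans H
    have hd := (comp x y).dom_not_le
    have hd' := (comp x' y).dom_not_le
    rw [comp_fst H, comp_snd H] at hd
    rw [comp_fst H', comp_snd H', ← h.1] at hd'
    refine ⟨by rw [comp_fst H, comp_fst H', h.1], ?_⟩
    rw [comp_fst H, comp_snd H, comp_snd H']
    exact h.2.mul_right x.isPrimeE x.isPU x'.isPU y.isPU hd hd'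
  · rwa [comp_of_not H, comp_of_not fun H' => H (h.target_eq.trans H')]

theorem comp_right (x : IncDom Q) (h : IncRel Q y y') : IncRel Q (comp x y) (comp x y') := by
  by_cases H : x.target = y.source
  · have H' : x.target = y'.source := H.trans (Subtype.ext h.1)
    refine ⟨by rw [comp_fst H, comp_fst H'], ?_⟩
    rw [comp_fst H, comp_snd H, comp_snd H']
    exact Incident.mul_left x.isPrimeE.1 x.isPU y.isPU (target_eq_source_iff.1 H ▸ h.2)
  · rw [comp_of_not H, comp_of_not fun H' => H (H'.trans (Subtype.ext h.1).symm)]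
    exact refl x

theorem comp_inv (x : IncDom Q) : IncRel Q (comp x x.inv) (unit x.source) := by
  have H : x.target = x.inv.source := rfl
  refine ⟨comp_fst H, ?_⟩
  rw [comp_fst H, comp_snd H]
  exact incident_one_of_le_one x.isPU.2 x.dom_not_le

theorem inv_comp (x : IncDom Q) : IncRel Q (comp x.inv x) (unit x.target) := by
  have H : x.inv.target = x.source := target_inv x
  refine ⟨comp_fst H, ?_⟩
  rw [comp_fst H, comp_snd H]
  exact incident_one_of_le_one x.isPU.1
    (star_mul_not_le_imagePt x.isPrimeE.1 x.isPU x.dom_not_le)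

end IncRel

open SGFQuantale IncDom

noncomputable def incidenceGroupoid (Q : Type*) [SGFQuantale Q] :
    SetGroupoid {p : Q // IsPrimeE p} (Quot (IncRel Q)) where
  d := Quot.lift source fun _ _ h => Subtype.ext h.1
  r := Quot.lift target fun _ _ h => h.target_eq
  u p := Quot.mk _ (unit p)
  mul := Quot.lift₂ (fun x y => Quot.mk _ (comp x y))
    (fun x _ _ h => Quot.sound (h.comp_right x)) (fun _ _ y h => Quot.sound (h.comp_left y))
  inv := Quot.lift (fun x => Quot.mk _ x.inv) fun _ _ h => Quot.sound h.inv
  d_u _ := rfl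
  r_u p := Subtype.ext (imagePt_one p.2)
  d_mul := by
    rintro ⟨x⟩ ⟨y⟩ H
    exact source_comp H
  r_mul := by
    rintro ⟨x⟩ ⟨y⟩ H
    exact target_comp H
  mul_assoc := by
    rintro ⟨x⟩ ⟨y⟩ ⟨z⟩ H₁ H₂
    exact congrArg _ (comp_assoc H₁ H₂)
  mul_u := by
    rintro ⟨x⟩
    exact congrArg _ (comp_unit_target x)
  u_mul := by
    rintro ⟨x⟩
    exact congrArg _ (unit_source_comp x)
  mul_inv := by
    rintro ⟨x⟩
    exact Quot.sound (IncRel.comp_inv x)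
  inv_mul := by
    rintro ⟨x⟩
    exact Quot.sound (IncRel.inv_comp x)
  d_inv := by
    rintro ⟨x⟩
    rfl
  r_inv := by
    rintro ⟨x⟩
    exact target_inv x

/-- For every SGF-quantale `Q`, the quotient of the incidence domain by the
incidence relation carries a set groupoid structure with units the primes of
`Q_e`, and structure maps `d [p,f] = p`, `r [p,f] = f[p]`, `u p = [p,e]`,
`[p,f]·[f[p],g] = [p, f g]` and `[p,f]⁻¹ = [f[p], f*]`. -/
theorem stmt17 (Q : Type*) [SGFQuantale Q] :
    ∃ G : SetGroupoid {p : Q // IsPrimeE p} (Quot (IncRel Q)),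
      (∀ x : IncDom Q, (G.d (Quot.mk (IncRel Q) x)).1 = x.1.1) ∧
      (∀ (x : IncDom Q) (q : Q), IsPrimeE q → ¬ star x.1.2 * x.1.2 ≤ q →
          x.1.1 * x.1.2 = x.1.2 * q →
          (G.r (Quot.mk (IncRel Q) x)).1 = q) ∧
      (∀ (p : {p : Q // IsPrimeE p}) (x : IncDom Q), x.1 = (p.1, 1) →
          G.u p = Quot.mk (IncRel Q) x) ∧
      (∀ x y z : IncDom Q, x.1.1 * x.1.2 = x.1.2 * y.1.1 →
          z.1 = (x.1.1, x.1.2 * y.1.2) →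
          G.mul (Quot.mk (IncRel Q) x) (Quot.mk (IncRel Q) y) = Quot.mk (IncRel Q) z) ∧
      (∀ x z : IncDom Q, x.1.1 * x.1.2 = x.1.2 * z.1.1 → z.1.2 = star x.1.2 →
          G.inv (Quot.mk (IncRel Q) x) = Quot.mk (IncRel Q) z) := by
  have imagePt_eq_of {x : IncDom Q} {q : Q} (hq : IsPrimeE q) (h : x.1.1 * x.1.2 = x.1.2 * q) :
      imagePt x.1.1 x.1.2 = q :=
    imagePt_eq x.isPrimeE x.isPU x.dom_not_le hq h
  refine ⟨incidenceGroupoid Q, fun _ => rfl, fun x q hq _ h => imagePt_eq_of hq h, ?_, ?_, ?_⟩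
  · intro p x hx
    exact congrArg _ (Subtype.ext hx.symm : unit p = x)
  · intro x y z h hz
    have H : x.target = y.source := target_eq_source_iff.2 (imagePt_eq_of y.isPrimeE h)
    exact congrArg _ (Subtype.ext ((comp_val H).trans hz.symm))
  · intro x z h hz
    exact congrArg _ (Subtype.ext (Prod.ext (imagePt_eq_of z.isPrimeE h) hz.symm))
end
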